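/- Let (R, α) be a multiplicative Hom-Lie conformal superalgebra. If D is a homogeneous α^k-derivation and D' a homogeneous α^s-derivation of R, then their commutator [D_λ D'], defined by [D_λ D']_μ(a) = D_λ(D'_{μ−λ}(a)) − (−1)^{|D||D'|} D'_{μ−λ}(D_λ(a)), is an α^{k+s}-derivation of R (with polynomial coefficients in λ). -/
import Mathlib


noncomputable section

namespace HLCS

open scoped BigOperators

/-- Evaluation at `l : ℂ` of a polynomial (in `λ`) with coefficients in `M`,
encoded as a finitely supported family of coefficients. -/
def pev {M : Type} [AddCommGroup M] [Module ℂ M] (l : ℂ) (p : ℕ →₀ M) : M :=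
  p.sum fun n r => l ^ n • r

/-- Evaluation of a polynomial with coefficients in `M` at an operator `T`
(used for substitutions such as `-λ - ∂`). -/
def pevOp {M : Type} [AddCommGroup M] [Module ℂ M] (T : Module.End ℂ M) (p : ℕ →₀ M) : M :=
  p.sum fun n r => (T ^ n) r

/-- The super sign `(-1)^{|a||b|}` attached to parities `i`, `j`. -/
def sg (i j : ZMod 2) : ℂ := (-1 : ℂ) ^ (i * j).val

/-- The data of a `ℤ₂`-graded `ℂ[∂]`-module `R` with an endomorphism `α` and a
`ℂ`-bilinear `λ`-bracket with values in `ℂ[λ] ⊗ R` (encoded by its coefficients). -/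
structure Data (R : Type) [AddCommGroup R] [Module ℂ R] where
  der : Module.End ℂ R
  alpha : Module.End ℂ R
  G : ZMod 2 → Submodule ℂ R
  br : R →ₗ[ℂ] R →ₗ[ℂ] (ℕ →₀ R)

namespace Data

variable {R : Type} [AddCommGroup R] [Module ℂ R] (S : Data R)

/-- `[a_λ b]` evaluated at `λ = l`. -/
def lb (l : ℂ) (a b : R) : R := pev l (S.br a b)

/-- `[a_{-l-∂} b]` : the bracket with `-l - ∂` substituted for `λ`. -/
def lbOp (l : ℂ) (a b : R) : R :=
  pevOp ((-l) • (1 : Module.End ℂ R) - S.der) (S.br a b)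

/-- Multiplicativity: `α [a_λ b] = [α(a)_λ α(b)]`. -/
def Mult : Prop := ∀ (l : ℂ) (a b : R), S.alpha (S.lb l a b) = S.lb l (S.alpha a) (S.alpha b)

end Data

variable {R : Type} [AddCommGroup R] [Module ℂ R]

/-- `(R, α)` with the given data is a Hom-Lie conformal superalgebra.
All polynomial identities in `λ, μ` are stated by evaluating at arbitrary
complex numbers (which is equivalent, `ℂ` being infinite). -/
structure IsHLCS (S : Data R) : Prop where
  internal : DirectSum.IsInternal S.G
  der_even : ∀ i, ∀ a ∈ S.G i, S.der a ∈ S.G i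
  alpha_even : ∀ i, ∀ a ∈ S.G i, S.alpha a ∈ S.G i
  alpha_der : ∀ a, S.alpha (S.der a) = S.der (S.alpha a)
  br_grade : ∀ i j, ∀ a ∈ S.G i, ∀ b ∈ S.G j, ∀ n, S.br a b n ∈ S.G (i + j)
  conf_left : ∀ (l : ℂ) (a b : R), S.lb l (S.der a) b = -l • S.lb l a b
  conf_right : ∀ (l : ℂ) (a b : R), S.lb l a (S.der b) = S.der (S.lb l a b) + l • S.lb l a b
  skew : ∀ i j, ∀ a ∈ S.G i, ∀ b ∈ S.G j, ∀ l : ℂ,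
    S.lb l a b = (-sg i j) • S.lbOp l b a
  jacobi : ∀ i j, ∀ a ∈ S.G i, ∀ b ∈ S.G j, ∀ (c : R) (l m : ℂ),
    S.lb l (S.alpha a) (S.lb m b c) =
      S.lb (l + m) (S.lb l a b) (S.alpha c) + sg i j • S.lb m (S.alpha b) (S.lb l a c)

end HLCS
namespace HLCS

variable {R : Type} [AddCommGroup R] [Module ℂ R]

/-- A homogeneous conformal linear map of parity `d` on `R`, encoded as the family of
its evaluations `F l : R → R` (`l : ℂ`): it is `ℂ`-linear, polynomial in `l`, and
satisfies `F_λ(∂a) = (∂ + λ) F_λ(a)`. -/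
structure IsConfMap (S : Data R) (d : ZMod 2) (F : ℂ → R → R) : Prop where
  map_add : ∀ (l : ℂ) (a b : R), F l (a + b) = F l a + F l b
  map_smul : ∀ (l c : ℂ) (a : R), F l (c • a) = c • F l a
  poly : ∀ a : R, ∃ p : ℕ →₀ R, ∀ l : ℂ, F l a = pev l p
  conf : ∀ (l : ℂ) (a : R), F l (S.der a) = S.der (F l a) + l • F l a
  grade : ∀ i, ∀ a ∈ S.G i, ∀ l : ℂ, F l a ∈ S.G (i + d)

/-- Membership in `Ω`: a homogeneous conformal linear map commuting with `α`. -/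
def InOmega (S : Data R) (d : ZMod 2) (F : ℂ → R → R) : Prop :=
  IsConfMap S d F ∧ ∀ (l : ℂ) (a : R), F l (S.alpha a) = S.alpha (F l a)

/-- An `α^k`-derivation of parity `d`. -/
def IsDer (S : Data R) (k : ℕ) (d : ZMod 2) (F : ℂ → R → R) : Prop :=
  InOmega S d F ∧ ∀ i, ∀ a ∈ S.G i, ∀ (b : R) (l m : ℂ),
    F l (S.lb m a b) =
      S.lb (l + m) (F l a) ((S.alpha ^ k) b) +
        ((-1 : ℂ) ^ ((i * d).val)) • S.lb m ((S.alpha ^ k) a) (F l b)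

/-- The commutator `[D_λ D']_μ (a) = D_λ(D'_{μ-λ}(a)) - (-1)^{|D||D'|} D'_{μ-λ}(D_λ(a))`,
with `e = (-1)^{|D||D'|}`; first argument `l` is `λ`, second `m` is `μ`. -/
def brkt (e : ℂ) (F G : ℂ → R → R) : ℂ → ℂ → R → R :=
  fun l m a => F l (G (m - l) a) - e • G (m - l) (F l a)

/-- The twist `α'(D) = D ∘ α`. -/
def tw (S : Data R) (F : ℂ → R → R) : ℂ → R → R := fun l a => F l (S.alpha a)

/-- A generalized `α^k`-derivation of parity `d`. -/
def IsGDer (S : Data R) (k : ℕ) (d : ZMod 2) (F : ℂ → R → R) : Prop :=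
  InOmega S d F ∧ ∃ F' F'' : ℂ → R → R, InOmega S d F' ∧ InOmega S d F'' ∧
    ∀ i, ∀ a ∈ S.G i, ∀ (b : R) (l m : ℂ),
      S.lb (l + m) (F m a) ((S.alpha ^ k) b) +
        ((-1 : ℂ) ^ ((d * i).val)) • S.lb l ((S.alpha ^ k) a) (F' m b) = F'' m (S.lb l a b)

/-- An `α^k`-quasiderivation of parity `d`. -/
def IsQDer (S : Data R) (k : ℕ) (d : ZMod 2) (F : ℂ → R → R) : Prop :=
  InOmega S d F ∧ ∃ F' : ℂ → R → R, InOmega S d F' ∧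
    ∀ i, ∀ a ∈ S.G i, ∀ (b : R) (l m : ℂ),
      S.lb (l + m) (F m a) ((S.alpha ^ k) b) +
        ((-1 : ℂ) ^ ((d * i).val)) • S.lb l ((S.alpha ^ k) a) (F m b) = F' m (S.lb l a b)

/-- An `α^k`-centroid of parity `d`. -/
def IsCent (S : Data R) (k : ℕ) (d : ZMod 2) (F : ℂ → R → R) : Prop :=
  InOmega S d F ∧ ∀ i, ∀ a ∈ S.G i, ∀ (b : R) (l m : ℂ),
    S.lb (l + m) (F m a) ((S.alpha ^ k) b) =
      ((-1 : ℂ) ^ ((d * i).val)) • S.lb l ((S.alpha ^ k) a) (F m b) ∧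
    S.lb (l + m) (F m a) ((S.alpha ^ k) b) = F m (S.lb l a b)

/-- An `α^k`-quasicentroid of parity `d`. -/
def IsQC (S : Data R) (k : ℕ) (d : ZMod 2) (F : ℂ → R → R) : Prop :=
  InOmega S d F ∧ ∀ i, ∀ a ∈ S.G i, ∀ (b : R) (l m : ℂ),
    S.lb (l + m) (F m a) ((S.alpha ^ k) b) =
      ((-1 : ℂ) ^ ((d * i).val)) • S.lb l ((S.alpha ^ k) a) (F m b)

/-- An `α^k`-central derivation of parity `d`. -/
def IsZDer (S : Data R) (k : ℕ) (d : ZMod 2) (F : ℂ → R → R) : Prop :=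
  InOmega S d F ∧ ∀ (a b : R) (l m : ℂ),
    S.lb (l + m) (F m a) ((S.alpha ^ k) b) = 0 ∧ F m (S.lb l a b) = 0

/-- Membership in the center `Z(R)`. -/
def IsCentral (S : Data R) (x : R) : Prop := ∀ (l : ℂ) (y : R), S.lb l x y = 0

end HLCS
namespace HLCS

variable {R : Type} [AddCommGroup R] [Module ℂ R]


section AuxLemmas

variable {R : Type} [AddCommGroup R] [Module ℂ R]

section pevlemmas
variable {M : Type} [AddCommGroup M] [Module ℂ M]

lemma pev_single (l : ℂ) (j : ℕ) (r : M) : pev l (Finsupp.single j r) = l ^ j • r :=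
  Finsupp.sum_single_index (smul_zero _)

lemma pev_add (l : ℂ) (p q : ℕ →₀ M) : pev l (p + q) = pev l p + pev l q :=
  Finsupp.sum_add_index' (fun _ => smul_zero _) (fun _ b c => smul_add _ b c)

lemma pev_smul (l c : ℂ) (p : ℕ →₀ M) : pev l (c • p) = c • pev l p := by
  unfold pev
  rw [Finsupp.sum_smul_index' (fun i => smul_zero _), Finsupp.smul_sum]
  exact Finsupp.sum_congr fun n _ => smul_comm _ _ _

lemma pev_sub (l : ℂ) (p q : ℕ →₀ M) : pev l (p - q) = pev l p - pev l q := by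
  have h : p - q = p + (-1 : ℂ) • q := by rw [neg_one_smul]; abel
  rw [h, pev_add, pev_smul, neg_one_smul]; abel

def pevL (l : ℂ) : (ℕ →₀ M) →ₗ[ℂ] M :=
  Finsupp.lsum ℂ fun n => (l ^ n) • (LinearMap.id : M →ₗ[ℂ] M)

lemma pev_eq_pevL (l : ℂ) (p : ℕ →₀ M) : pev l p = pevL l p := by
  rw [pevL, Finsupp.lsum_apply]; rfl

/-- shift: `pev m (shift l p) = pev (m - l) p`. -/
def shift (l : ℂ) (p : ℕ →₀ M) : ℕ →₀ M :=
  p.sum fun n r => (Finset.range (n + 1)).sum fun j =>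
    Finsupp.single j ((((n.choose j : ℂ)) * (-l) ^ (n - j)) • r)

lemma pev_shift (l m : ℂ) (p : ℕ →₀ M) : pev m (shift l p) = pev (m - l) p := by
  rw [pev_eq_pevL, shift, map_finsuppSum]
  unfold pev
  refine Finsupp.sum_congr fun n _ => ?_
  rw [map_sum]
  have step : ∀ j ∈ Finset.range (n + 1),
      pevL (M := M) m (Finsupp.single j (((n.choose j : ℂ) * (-l) ^ (n - j)) • p n)) =
      (m ^ j * (-l) ^ (n - j) * (n.choose j : ℂ)) • p n := by
    intro j _
    rw [← pev_eq_pevL, pev_single, smul_smul]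
    ring_nf
  rw [Finset.sum_congr rfl step, ← Finset.sum_smul, ← add_pow]
  have h : m + -l = m - l := by ring
  rw [h]

lemma pev_map (φ : M →ₗ[ℂ] M) (l : ℂ) (p : ℕ →₀ M) :
    φ (pev l p) = pev l (Finsupp.mapRange φ (map_zero φ) p) := by
  unfold pev
  rw [map_finsuppSum, Finsupp.sum_mapRange_index (fun _ => smul_zero _)]
  exact Finsupp.sum_congr fun n _ => map_smul φ _ _

end pevlemmas

lemma chi_add (x y : ZMod 2) :
    ((-1 : ℂ)) ^ ((x + y).val) = (-1) ^ x.val * (-1) ^ y.val := by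
  rw [ZMod.val_add, ← neg_one_pow_eq_pow_mod_two, pow_add]

lemma sign_cases (x : ZMod 2) : ((-1 : ℂ)) ^ x.val = 1 ∨ ((-1 : ℂ)) ^ x.val = -1 := by
  have h : x.val = 0 ∨ x.val = 1 := by have := ZMod.val_lt x; omega
  rcases h with h | h <;> rw [h] <;> simp

section lb
variable (S : Data R)

lemma lb_sub_left (m : ℂ) (x y b : R) : S.lb m (x - y) b = S.lb m x b - S.lb m y b := by
  unfold Data.lb; rw [map_sub, LinearMap.sub_apply, pev_sub]

lemma lb_smul_left (m c : ℂ) (x b : R) : S.lb m (c • x) b = c • S.lb m x b := by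
  unfold Data.lb; rw [map_smul, LinearMap.smul_apply, pev_smul]

lemma lb_sub_right (m : ℂ) (a x y : R) : S.lb m a (x - y) = S.lb m a x - S.lb m a y := by
  unfold Data.lb; rw [map_sub, pev_sub]

lemma lb_smul_right (m c : ℂ) (a x : R) : S.lb m a (c • x) = c • S.lb m a x := by
  unfold Data.lb; rw [map_smul, pev_smul]

lemma pow_grade (S : Data R) (hS : IsHLCS S) (n : ℕ) (i : ZMod 2) (a : R) (ha : a ∈ S.G i) :
    (S.alpha ^ n) a ∈ S.G i := by
  induction n with
  | zero => simpa using ha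
  | succ n ih =>
    rw [pow_succ', Module.End.mul_apply]
    exact hS.alpha_even i _ ih

lemma comm_pow {F : ℂ → R → R} (h : ∀ (l : ℂ) (a : R), F l (S.alpha a) = S.alpha (F l a))
    (n : ℕ) (l : ℂ) (a : R) : F l ((S.alpha ^ n) a) = (S.alpha ^ n) (F l a) := by
  induction n generalizing a with
  | zero => simp
  | succ n ih =>
    rw [pow_succ, Module.End.mul_apply, ih, h, ← Module.End.mul_apply, ← pow_succ]

lemma pow_pow_apply (k s : ℕ) (x : R) :
    (S.alpha ^ k) ((S.alpha ^ s) x) = (S.alpha ^ (k + s)) x := by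
  rw [pow_add, Module.End.mul_apply]

lemma pow_pow_apply' (k s : ℕ) (x : R) :
    (S.alpha ^ s) ((S.alpha ^ k) x) = (S.alpha ^ (k + s)) x := by
  rw [add_comm, pow_add, Module.End.mul_apply]

end lb

/-- The linear map underlying a conformal map at a fixed value of `λ`. -/
def IsConfMap.lin {S : Data R} {d : ZMod 2} {F : ℂ → R → R} (hF : IsConfMap S d F) (l : ℂ) :
    R →ₗ[ℂ] R where
  toFun := F l
  map_add' := hF.map_add l
  map_smul' := fun c x => by simpa using hF.map_smul l c x

end AuxLemmas

/-- In a multiplicative Hom-Lie conformal superalgebra `(R, α)`,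
the commutator `[D_λ D']_μ(a) = D_λ(D'_{μ-λ}(a)) - (-1)^{|D||D'|} D'_{μ-λ}(D_λ(a))`
of a homogeneous `α^k`-derivation `D` and a homogeneous `α^s`-derivation `D'` is
an `α^{k+s}`-derivation (with polynomial coefficients in `λ`, i.e. for every
value `l` of `λ`). -/
theorem commutator_of_derivations (S : Data R) (hS : IsHLCS S) (hmult : S.Mult)
    (k s : ℕ) (d d' : ZMod 2) (F G : ℂ → R → R)
    (hF : IsDer S k d F) (hG : IsDer S s d' G) :
    ∀ l : ℂ, IsDer S (k + s) (d + d') (brkt ((-1 : ℂ) ^ ((d * d').val)) F G l) := by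
  intro l
  have hFc := hF.1.1
  have hGc := hG.1.1
  have hFa := hF.1.2
  have hGa := hG.1.2
  have hFpow := comm_pow S hFa
  have hGpow := comm_pow S hGa
  refine ⟨⟨⟨?_, ?_, ?_, ?_, ?_⟩, ?_⟩, ?_⟩
  · -- map_add
    intro m x y
    simp only [brkt]
    rw [hGc.map_add (m - l) x y, hFc.map_add l (G (m - l) x) (G (m - l) y),
      hFc.map_add l x y, hGc.map_add (m - l) (F l x) (F l y)]
    module
  · -- map_smul
    intro m c x
    simp only [brkt]
    rw [hGc.map_smul (m - l) c x, hFc.map_smul l c (G (m - l) x),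
      hFc.map_smul l c x, hGc.map_smul (m - l) c (F l x)]
    module
  · -- poly
    intro a
    obtain ⟨q1, hq1⟩ := hGc.poly a
    obtain ⟨q2, hq2⟩ := hGc.poly (F l a)
    refine ⟨shift l (Finsupp.mapRange (hFc.lin l) (map_zero _) q1) -
      shift l (((-1 : ℂ) ^ ((d * d').val)) • q2), fun m => ?_⟩
    simp only [brkt]
    rw [hq1 (m - l), hq2 (m - l), pev_sub, pev_shift, pev_shift, pev_smul,
      show F l (pev (m - l) q1) = hFc.lin l (pev (m - l) q1) from rfl,
      pev_map (hFc.lin l) (m - l) q1]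
  · -- conf
    intro m a
    simp only [brkt]
    rw [hGc.conf (m - l) a, hFc.map_add l _ _, hFc.map_smul l (m - l) _,
      hFc.conf l (G (m - l) a), hFc.conf l a, hGc.map_add (m - l) _ _,
      hGc.map_smul (m - l) l _, hGc.conf (m - l) (F l a), map_sub, map_smul]
    module
  · -- grade
    intro i a ha m
    simp only [brkt]
    refine Submodule.sub_mem _ ?_ (Submodule.smul_mem _ _ ?_)
    · have h := hFc.grade (i + d') _ (hGc.grade i a ha (m - l)) l
      have e1 : i + d' + d = i + (d + d') := by ring
      rwa [e1] at h
    · have h := hGc.grade (i + d) _ (hFc.grade i a ha l) (m - l)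
      have e1 : i + d + d' = i + (d + d') := by ring
      rwa [e1] at h
  · -- commutes with alpha
    intro m a
    simp only [brkt]
    rw [hGa (m - l) a, hFa l (G (m - l) a), hFa l a, hGa (m - l) (F l a),
      map_sub, map_smul]
  · -- the derivation identity
    intro i a ha b p q
    simp only [brkt]
    rw [hG.2 i a ha b (p - l) q,
      hFc.map_add l _ _, hFc.map_smul l _ _,
      hF.2 (i + d') _ (hGc.grade i a ha (p - l)) ((S.alpha ^ s) b) l ((p - l) + q),
      hF.2 i _ (pow_grade S hS s i a ha) (G (p - l) b) l q,
      hF.2 i a ha b l q,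
      hGc.map_add (p - l) _ _, hGc.map_smul (p - l) _ _,
      hG.2 (i + d) _ (hFc.grade i a ha l) ((S.alpha ^ k) b) (p - l) (l + q),
      hG.2 i _ (pow_grade S hS k i a ha) (F l b) (p - l) q,
      lb_sub_left, lb_smul_left, lb_sub_right, lb_smul_right]
    simp only [hFpow, hGpow, pow_pow_apply, pow_pow_apply']
    rw [show s + k = k + s from Nat.add_comm s k]
    have c1 : l + (p - l + q) = p + q := by ring
    have c2 : p - l + (l + q) = p + q := by ring
    rw [c1, c2]
    have s1 : (i + d') * d = i * d + d * d' := by ring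
    have s2 : (i + d) * d' = i * d' + d * d' := by ring
    have s3 : i * (d + d') = i * d + i * d' := by ring
    rw [s1, s2, s3, chi_add, chi_add, chi_add]
    rcases sign_cases (i * d) with h1 | h1 <;>
      rcases sign_cases (i * d') with h2 | h2 <;>
        rcases sign_cases (d * d') with h3 | h3 <;>
          rw [h1, h2, h3] <;> module


end HLCS
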